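/- Let G be a group, and let b, s ∈ G. Let H = ⟨s, b s b⁻¹⟩. Define B = {x ∈ G : x b⁻¹ ∈ H}. If y ∈ B and x = sᵏ y s⁻ᵏ for some integer k, then x ∈ B. -/
import Mathlib


theorem mem_B_of_conj_zpow {G : Type*} [Group G] (b s : G)
    (H : Subgroup G) (hH : H = Subgroup.closure {s, b * s * b⁻¹})
    (y x : G) (hy : y * b⁻¹ ∈ H) (k : ℤ) (hx : x = s ^ k * y * s ^ (-k)) :
    x * b⁻¹ ∈ H := by
  have hs : s ∈ H := hH ▸ Subgroup.subset_closure (by simp)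
  have hbsb : b * s * b⁻¹ ∈ H := hH ▸ Subgroup.subset_closure (by simp)
  have key : x * b⁻¹ = s ^ k * (y * b⁻¹) * (b * s * b⁻¹) ^ (-k) := by
    rw [hx]
    have : (b * s * b⁻¹) ^ (-k) = b * s ^ (-k) * b⁻¹ := by
      exact conj_zpow
    rw [this]; group
  rw [key]
  exact mul_mem (mul_mem (zpow_mem hs k) hy) (zpow_mem hbsb (-k))
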